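/- Let k, n be integers with k ≥ 1 and n ≥ k + 2. Then for every x > 0, the second central moment of the Gamma-type operator satisfies M_{n,k}(φ_{x,2}; x) = ((k² − 5k + 2n + 4)/(n(n−1)))·x². -/

import Mathlib

open MeasureTheory Set

/-- The Gamma-type operator `M_{n,k}(f;x)`. -/
noncomputable def Mnk (n k : ℕ) (f : ℝ → ℝ) (x : ℝ) : ℝ :=
  (((2 * n - k + 1).factorial : ℝ) * x ^ (n + 1) /
      ((n.factorial : ℝ) * ((n - k).factorial : ℝ))) *
    ∫ t in Ioi (0 : ℝ), t ^ (n - k) / (x + t) ^ (2 * n - k + 2) * f t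

/-- The polynomial weight: `w_0 = 1`, `w_p(x) = 1/(1+x^p)` for `p ≥ 1`. -/
noncomputable def wp (p : ℕ) (x : ℝ) : ℝ := if p = 0 then 1 else 1 / (1 + x ^ p)

/-- The weighted sup-norm `‖f‖_p = sup_{x ≥ 0} w_p(x)|f(x)|`. -/
noncomputable def pNorm (p : ℕ) (f : ℝ → ℝ) : ℝ :=
  ⨆ x : {x : ℝ // 0 ≤ x}, wp p x.val * |f x.val|

/-- Second symmetric difference `Δ_h² f`. -/
def Delta2 (h : ℝ) (f : ℝ → ℝ) (x : ℝ) : ℝ := f (x + 2 * h) - 2 * f (x + h) + f x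

/-- Second weighted modulus of smoothness `ω_p²(f;δ)`. -/
noncomputable def omega2 (p : ℕ) (f : ℝ → ℝ) (δ : ℝ) : ℝ :=
  ⨆ h : {h : ℝ // 0 < h ∧ h ≤ δ}, pNorm p (Delta2 h.val f)

/-- First weighted modulus `ω_p¹(f;δ)`. -/
noncomputable def omega1 (p : ℕ) (f : ℝ → ℝ) (δ : ℝ) : ℝ :=
  sSup {y : ℝ | ∃ t x : ℝ, 0 ≤ t ∧ 0 ≤ x ∧ |t - x| ≤ δ ∧ y = wp p x * |f t - f x|}

/-- Membership in the weighted space `C_p`: `w_p·f` is bounded and uniformly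
continuous on `[0,∞)`. -/
def CpMem (p : ℕ) (f : ℝ → ℝ) : Prop :=
  (∃ B : ℝ, ∀ x ≥ (0 : ℝ), |wp p x * f x| ≤ B) ∧
    UniformContinuousOn (fun x => wp p x * f x) (Ici 0)

/-- Steklov mean `f_h`. -/
noncomputable def steklov (f : ℝ → ℝ) (h : ℝ) (x : ℝ) : ℝ :=
  4 / h ^ 2 *
    ∫ s in (0 : ℝ)..(h / 2), ∫ t in (0 : ℝ)..(h / 2),
      (2 * f (x + s + t) - f (x + 2 * (s + t)))

/-!
Expanding `(t - x)²` reduces the claim to the moments `M_{n,k}(t^j; x)` for `j ≤ 2`. Each of these is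
a multiple of the Beta integral `∫₀^∞ t^A (x+t)^{-(A+m+2)} dt = A! m! / ((A+m+1)! x^{m+1})`, which
follows by induction on `A` from the elementary case `A = 0`: writing `t = (x + t) - x` expresses the
integral for `A + 1` through those for `A` with `m` and `m + 1`. In terms of rising and falling
factorials this gives `M_{n,k}(t^j; x) = (n-k+1)^{(j)} / n_{(j)} · x^j`.
-/

open Filter Topology Nat

section BetaIntegral

variable {x : ℝ}

lemma hasDerivAt_neg_inv_mul_add_pow (m : ℕ) {t : ℝ} (ht : x + t ≠ 0) :
    HasDerivAt (fun t => -(((m : ℝ) + 1) * (x + t) ^ (m + 1))⁻¹) (1 / (x + t) ^ (m + 2)) t := by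
  have hpow : HasDerivAt (fun t => ((m : ℝ) + 1) * (x + t) ^ (m + 1))
      (((m : ℝ) + 1) * ((m + 1 : ℕ) * (x + t) ^ m * 1)) t :=
    (((hasDerivAt_id t).const_add x).pow (m + 1)).const_mul _
  refine ((hpow.fun_inv (by positivity)).fun_neg).congr_deriv ?_
  push_cast
  field_simp
  ring

lemma tendsto_neg_inv_mul_add_pow_atTop (m : ℕ) :
    Tendsto (fun t => -(((m : ℝ) + 1) * (x + t) ^ (m + 1))⁻¹) atTop (𝓝 0) := by
  have hpow : Tendsto (fun t => ((m : ℝ) + 1) * (x + t) ^ (m + 1)) atTop atTop :=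
    ((tendsto_pow_atTop (Nat.succ_ne_zero m)).comp
      (tendsto_atTop_add_const_left _ x tendsto_id)).const_mul_atTop (by positivity)
  simpa using hpow.inv_tendsto_atTop.neg

lemma integrableOn_Ioi_one_div_add_pow (hx : 0 < x) (m : ℕ) :
    IntegrableOn (fun t => 1 / (x + t) ^ (m + 2)) (Ioi 0) :=
  integrableOn_Ioi_deriv_of_nonneg'
    (fun t ht => hasDerivAt_neg_inv_mul_add_pow m (add_pos_of_pos_of_nonneg hx ht).ne')
    (fun t ht => by have := add_pos hx ht; positivity)
    (tendsto_neg_inv_mul_add_pow_atTop m)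

lemma integral_Ioi_one_div_add_pow (hx : 0 < x) (m : ℕ) :
    ∫ t in Ioi 0, 1 / (x + t) ^ (m + 2) = 1 / (((m : ℝ) + 1) * x ^ (m + 1)) := by
  rw [integral_Ioi_of_hasDerivAt_of_tendsto'
    (fun t ht => hasDerivAt_neg_inv_mul_add_pow m (add_pos_of_pos_of_nonneg hx ht).ne')
    (integrableOn_Ioi_one_div_add_pow hx m) (tendsto_neg_inv_mul_add_pow_atTop m)]
  simp

lemma eqOn_pow_succ_div_add_pow (hx : 0 < x) (A m : ℕ) :
    EqOn (fun t => t ^ (A + 1) / (x + t) ^ (A + 1 + m + 2))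
      (fun t => t ^ A / (x + t) ^ (A + m + 2) - x * (t ^ A / (x + t) ^ (A + (m + 1) + 2)))
      (Ioi 0) :=
  fun t ht => by
    have : x + t ≠ 0 := (add_pos hx ht).ne'
    field_simp
    ring

lemma integrableOn_Ioi_pow_div_add_pow (hx : 0 < x) (A m : ℕ) :
    IntegrableOn (fun t => t ^ A / (x + t) ^ (A + m + 2)) (Ioi 0) := by
  induction A generalizing m with
  | zero => simpa using integrableOn_Ioi_one_div_add_pow hx m
  | succ A ih =>
    exact (integrableOn_congr_fun (eqOn_pow_succ_div_add_pow hx A m) measurableSet_Ioi).2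
      ((ih m).sub ((ih (m + 1)).const_mul x))

theorem integral_Ioi_pow_div_add_pow (hx : 0 < x) (A m : ℕ) :
    ∫ t in Ioi 0, t ^ A / (x + t) ^ (A + m + 2) =
      (A ! * m ! : ℝ) / ((A + m + 1)! * x ^ (m + 1)) := by
  induction A generalizing m with
  | zero =>
    simp only [pow_zero, zero_add]
    rw [integral_Ioi_one_div_add_pow hx m, factorial_zero, factorial_succ]
    push_cast
    field_simp
  | succ A ih =>
    rw [setIntegral_congr_fun measurableSet_Ioi (eqOn_pow_succ_div_add_pow hx A m),
      integral_sub (integrableOn_Ioi_pow_div_add_pow hx A m)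
        ((integrableOn_Ioi_pow_div_add_pow hx A (m + 1)).const_mul x),
      integral_const_mul, ih, ih, show A + 1 + m + 1 = A + (m + 1) + 1 by omega]
    simp only [factorial_succ, show A + (m + 1) = A + m + 1 by omega]
    push_cast
    field_simp
    ring

end BetaIntegral

section Moments

variable {n k : ℕ} {x : ℝ}

lemma Mnk_kernel_mul_pow {j : ℕ} (hk : k ≤ n) (hj : j ≤ n) :
    (fun t : ℝ => t ^ (n - k) / (x + t) ^ (2 * n - k + 2) * t ^ j) =
      fun t => t ^ (n - k + j) / (x + t) ^ (n - k + j + (n - j) + 2) := by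
  funext t
  rw [show n - k + j + (n - j) + 2 = 2 * n - k + 2 by omega]
  ring

lemma integrableOn_Mnk_kernel_mul_pow (hx : 0 < x) {j : ℕ} (hk : k ≤ n) (hj : j ≤ n) :
    IntegrableOn (fun t => t ^ (n - k) / (x + t) ^ (2 * n - k + 2) * t ^ j) (Ioi 0) := by
  rw [Mnk_kernel_mul_pow hk hj]
  exact integrableOn_Ioi_pow_div_add_pow hx _ _

theorem Mnk_pow (hx : 0 < x) {j : ℕ} (hk : k ≤ n) (hj : j ≤ n) :
    Mnk n k (fun t => t ^ j) x = (n - k + 1).ascFactorial j / n.descFactorial j * x ^ j := by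
  rw [Mnk, Mnk_kernel_mul_pow hk hj, integral_Ioi_pow_div_add_pow hx,
    show n - k + j + (n - j) + 1 = 2 * n - k + 1 by omega]
  have hfac_n : ((n - j)! * n.descFactorial j : ℝ) = n ! := by
    exact_mod_cast factorial_mul_descFactorial hj
  have hfac_nk : ((n - k)! * (n - k + 1).ascFactorial j : ℝ) = (n - k + j)! := by
    exact_mod_cast factorial_mul_ascFactorial (n - k) j
  have hpow : x ^ (n + 1) = x ^ j * x ^ (n - j + 1) := by
    rw [← pow_add]; congr 1; omega
  rw [← hfac_n, ← hfac_nk, hpow]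
  field_simp

theorem Mnk_sum_mul_pow (hx : 0 < x) (hk : k ≤ n) (s : Finset ℕ) (hs : ∀ j ∈ s, j ≤ n)
    (c : ℕ → ℝ) :
    Mnk n k (fun t => ∑ j ∈ s, c j * t ^ j) x = ∑ j ∈ s, c j * Mnk n k (fun t => t ^ j) x := by
  have hint : ∀ j ∈ s, IntegrableOn
      (fun t => c j * (t ^ (n - k) / (x + t) ^ (2 * n - k + 2) * t ^ j)) (Ioi 0) :=
    fun j hj => (integrableOn_Mnk_kernel_mul_pow hx hk (hs j hj)).const_mul (c j)
  simp only [Mnk, Finset.mul_sum, mul_left_comm _ (c _)]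
  rw [integral_finsetSum s hint]
  simp only [integral_const_mul, Finset.mul_sum, mul_left_comm _ (c _)]

end Moments

theorem Mnk_central_moment_two_general (k n : ℕ) (hn : k + 2 ≤ n)
    (x : ℝ) (hx : 0 < x) :
    Mnk n k (fun t => (t - x) ^ 2) x =
      ((k : ℝ) ^ 2 - 5 * (k : ℝ) + 2 * (n : ℝ) + 4) / ((n : ℝ) * ((n : ℝ) - 1)) * x ^ 2 := by
  have hk : k ≤ n := by omega
  have hsq : (fun t => (t - x) ^ 2) =
      fun t => ∑ j ∈ Finset.range 3, (-x) ^ (2 - j) * (choose 2 j : ℝ) * t ^ j := by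
    funext t
    rw [sub_eq_add_neg, add_pow]
    exact Finset.sum_congr rfl fun j _ => by ring
  rw [hsq, Mnk_sum_mul_pow hx hk _ (fun j hj => by have := Finset.mem_range.1 hj; omega)]
  simp only [Finset.sum_range_succ, Finset.sum_range_zero, zero_add]
  rw [Mnk_pow hx hk (by omega), Mnk_pow hx hk (by omega), Mnk_pow hx hk (by omega)]
  norm_num [ascFactorial_succ, descFactorial_succ, Nat.cast_sub hk,
    Nat.cast_sub (show 1 ≤ n by omega)]
  have hn0 : (n : ℝ) ≠ 0 := by norm_cast; omega
  have hn1 : (n : ℝ) - 1 ≠ 0 := by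
    rw [sub_ne_zero]; norm_cast; omega
  field_simp
  ring

/-- Second central moment: `M_{n,k}(φ_{x,2};x) = ((k²−5k+2n+4)/(n(n−1)))·x²`. -/
theorem Mnk_central_moment_two (k n : ℕ) (hk : 1 ≤ k) (hn : k + 2 ≤ n)
    (x : ℝ) (hx : 0 < x) :
    Mnk n k (fun t => (t - x) ^ 2) x =
      ((k : ℝ) ^ 2 - 5 * (k : ℝ) + 2 * (n : ℝ) + 4) / ((n : ℝ) * ((n : ℝ) - 1)) * x ^ 2 :=
  Mnk_central_moment_two_general k n hn x hx
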